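/- For each Jordan curve γ ⊂ ℝ² and each ε > 0, there exists δ > 0 such that for every Jordan curve η contained in γ ⊕ δ, there is a continuous map φ : η → γ with ‖φ(x) − x‖ < ε for all x ∈ η. -/

import Mathlib

open Set Filter Metric Real MeasureTheory

noncomputable section

/-- The Euclidean plane. -/
abbrev E2 := EuclideanSpace ℝ (Fin 2)

/-- `φ` is a parametrization of the curve `γ`: a continuous injective map from the unit
circle onto `γ` (such a map is automatically a homeomorphism onto its image). -/
def IsParam (γ : Set E2) (φ : Circle → E2) : Prop :=
  Continuous φ ∧ Function.Injective φ ∧ Set.range φ = γ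

/-- A Jordan curve in the plane: the image of a continuous injective map from the
unit circle. -/
def IsJordanCurve (γ : Set E2) : Prop :=
  ∃ φ : Circle → E2, IsParam γ φ

/-- The Fréchet distance between two Jordan curves. -/
noncomputable def frechetDist (γ₁ γ₂ : Set E2) : ℝ :=
  sInf { d : ℝ | ∃ φ₁ φ₂ : Circle → E2, IsParam γ₁ φ₁ ∧ IsParam γ₂ φ₂ ∧
    d = ⨆ x : Circle, ‖φ₁ x - φ₂ x‖ }

/-- The curvature vector of a curve `c` parametrized by angle, at parameter `x`:
`kn = (1/‖c'‖) ∂ₓ(c'/‖c'‖)`. -/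
noncomputable def curvatureVector (c : ℝ → E2) (x : ℝ) : E2 :=
  ‖deriv c x‖⁻¹ • deriv (fun y => ‖deriv c y‖⁻¹ • deriv c y) x

/-- A solution to the curvature flow problem with initial curve `γ₀` and stopping time `T`:
a smooth map `Γ : S¹ × (0,T) → ℝ²` (with `S¹` parametrized by angle, i.e. `Γ` is `2π`-periodic
in the space variable), injective on `S¹` with nonvanishing space derivative for each fixed
time, satisfying `∂ₜΓ = kn` and converging to `γ₀` in Fréchet distance as `t → 0⁺`. -/
structure CurvatureFlowSolution (γ₀ : Set E2) (T : ℝ) where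
  Γ : ℝ → ℝ → E2
  periodic : ∀ t, Function.Periodic (fun x => Γ x t) (2 * π)
  smooth : ContDiffOn ℝ (⊤ : ℕ∞) (fun p : ℝ × ℝ => Γ p.1 p.2) (univ ×ˢ Ioo 0 T)
  inj : ∀ t ∈ Ioo 0 T, ∀ x ∈ Ico 0 (2 * π), ∀ y ∈ Ico 0 (2 * π), Γ x t = Γ y t → x = y
  deriv_ne : ∀ t ∈ Ioo 0 T, ∀ x : ℝ, deriv (fun y => Γ y t) x ≠ 0
  flow : ∀ t ∈ Ioo 0 T, ∀ x : ℝ,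
    deriv (fun s => Γ x s) t = curvatureVector (fun y => Γ y t) x
  init : Tendsto (fun t => frechetDist (Set.range (fun x => Γ x t)) γ₀)
    (nhdsWithin 0 (Ioi 0)) (nhds 0)

/-- The evolved curve at time `t` (by convention, the initial curve at `t = 0`). -/
noncomputable def CurvatureFlowSolution.cf {γ₀ : Set E2} {T : ℝ}
    (sol : CurvatureFlowSolution γ₀ T) (t : ℝ) : Set E2 :=
  if t = 0 then γ₀ else Set.range (fun x => sol.Γ x t)

/-- A set consisting of exactly two points. -/
def HasTwoPoints (s : Set E2) : Prop := ∃ a b : E2, a ≠ b ∧ s = {a, b}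


/-- Normalization inclusion into the circle (identity on unit-norm complex numbers). -/
noncomputable def toCircleAux (z : ℂ) : Circle :=
  if h : ‖z‖ = 1 then ⟨z, mem_sphere_zero_iff_norm.2 h⟩ else 1

lemma toCircleAux_coe {z : ℂ} (h : ‖z‖ = 1) : (toCircleAux z : ℂ) = z := by
  simp [toCircleAux, h]

lemma continuousOn_toCircleAux : ContinuousOn toCircleAux (Metric.sphere (0:ℂ) 1) := by
  rw [continuousOn_iff_continuous_restrict]
  have h : (Metric.sphere (0:ℂ) 1).restrict toCircleAux
      = fun w => (⟨w.1, w.2⟩ : Circle) := by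
    funext w
    have hw : ‖(w : ℂ)‖ = 1 := mem_sphere_zero_iff_norm.1 w.2
    simp [Set.restrict, toCircleAux, hw]
    rfl
  rw [show (Metric.sphere (0:ℂ) 1).domRestrict toCircleAux = _ from h]
  exact Continuous.subtype_mk continuous_subtype_val _

/-- Lemma 2.1: for each Jordan curve `γ` and `ε > 0` there is `δ > 0`
such that every Jordan curve `η` contained in the `δ`-neighborhood `γ ⊕ δ` admits a
continuous map `φ : η → γ` moving each point less than `ε`. -/
theorem jordanCurve_nearby_map
    (γ : Set E2) (hγ : IsJordanCurve γ) (ε : ℝ) (hε : 0 < ε) :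
    ∃ δ > (0 : ℝ), ∀ η : Set E2, IsJordanCurve η →
      η ⊆ {p : E2 | ∃ q ∈ γ, dist p q ≤ δ} →
      ∃ φ : E2 → E2, ContinuousOn φ η ∧ Set.MapsTo φ η γ ∧
        ∀ x ∈ η, ‖φ x - x‖ < ε := by
  obtain ⟨φ0, hcont, hinj, hrange⟩ := hγ
  have hmem : ∀ z : Circle, φ0 z ∈ γ := fun z => hrange ▸ mem_range_self z
  have hbij : Function.Bijective (fun z : Circle => (⟨φ0 z, hmem z⟩ : γ)) := by
    constructor
    · intro a b hab
      exact hinj (congrArg Subtype.val hab)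
    · rintro ⟨y, hy⟩
      obtain ⟨z, hz⟩ : y ∈ Set.range φ0 := hrange ▸ hy
      exact ⟨z, Subtype.ext hz⟩
  have heqv : Continuous (Equiv.ofBijective _ hbij) :=
    Continuous.subtype_mk hcont hmem
  let e : Circle ≃ₜ γ := Continuous.homeoOfEquivCompactToT2 heqv
  have he_apply : ∀ z : Circle, ((e z : γ) : E2) = φ0 z := fun z => rfl
  have hγcomp : IsCompact γ := hrange ▸ isCompact_range hcont
  have hγclosed : IsClosed γ := hγcomp.isClosed
  let f0 : C(γ, ℂ) := ⟨fun y => ((e.symm y : Circle) : ℂ),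
    continuous_subtype_val.comp e.symm.continuous⟩
  obtain ⟨F, hF⟩ := f0.exists_restrict_eq hγclosed
  have hFγ : ∀ x (hx : x ∈ γ), F x = ((e.symm ⟨x, hx⟩ : Circle) : ℂ) := by
    intro x hx
    exact ContinuousMap.congr_fun hF ⟨x, hx⟩
  have hFγ1 : ∀ x (hx : x ∈ γ), ‖F x‖ = 1 := by
    intro x hx
    rw [hFγ x hx]
    simpa using Circle.norm_coe (e.symm ⟨x, hx⟩)
  set N : E2 → ℂ := fun x => ((‖F x‖ : ℝ) : ℂ)⁻¹ * F x with hNdef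
  set ψ : E2 → E2 := fun x => φ0 (toCircleAux (N x)) with hψdef
  have hψγ : ∀ x, ψ x ∈ γ := fun x => hrange ▸ mem_range_self _
  set V : Set E2 := {x | F x ≠ 0} with hVdef
  have hVopen : IsOpen V := by
    have : V = F ⁻¹' ({0}ᶜ) := rfl
    rw [this]
    exact F.continuous.isOpen_preimage _ isOpen_compl_singleton
  have hNV : ∀ x ∈ V, ‖N x‖ = 1 := by
    intro x hx
    have h0 : ‖F x‖ ≠ 0 := norm_ne_zero_iff.2 hx
    have h0' : ‖F x‖ ≠ 0 := by exact h0
    simp [hNdef, norm_mul, norm_inv, Complex.norm_real, abs_norm,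
      inv_mul_cancel₀ h0']
  have hψcont : ContinuousOn ψ V := by
    have hNcont : ContinuousOn N V := by
      apply ContinuousOn.mul
      · apply ContinuousOn.inv₀
        · exact (Complex.continuous_ofReal.comp F.continuous.norm).continuousOn
        · intro x hx
          simpa using norm_ne_zero_iff.2 hx
      · exact F.continuous.continuousOn
    refine hcont.comp_continuousOn (continuousOn_toCircleAux.comp hNcont ?_)
    intro x hx
    exact mem_sphere_zero_iff_norm.2 (hNV x hx)
  have hψid : ∀ x (hx : x ∈ γ), ψ x = x := by
    intro x hx
    have h1 : F x = ((e.symm ⟨x, hx⟩ : Circle) : ℂ) := hFγ x hx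
    have h2 : ‖F x‖ = 1 := hFγ1 x hx
    have hNx : N x = F x := by
      have h2' : ‖F x‖ = 1 := by exact h2
      simp [hNdef, h2']
    have h3 : toCircleAux (N x) = e.symm ⟨x, hx⟩ := by
      apply Circle.ext
      rw [toCircleAux_coe (by rw [hNx]; exact h2), hNx, h1]
    have h4 : ψ x = φ0 (e.symm ⟨x, hx⟩) := by rw [hψdef]; simp only [h3]
    rw [h4, ← he_apply (e.symm ⟨x, hx⟩), e.apply_symm_apply]
  set U : Set E2 := {x | F x ≠ 0 ∧ dist (ψ x) x < ε} with hUdef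
  have hUopen : IsOpen U := by
    rw [isOpen_iff_mem_nhds]
    rintro x ⟨hx1, hx2⟩
    have hVnhds : V ∈ nhds x := hVopen.mem_nhds hx1
    have hψat : ContinuousAt ψ x := hψcont.continuousAt hVnhds
    have hg : ContinuousAt (fun y => dist (ψ y) y) x := hψat.dist continuousAt_id
    have h2 : {y | dist (ψ y) y < ε} ∈ nhds x := hg.preimage_mem_nhds (Iio_mem_nhds hx2)
    filter_upwards [Filter.inter_mem hVnhds h2] with y hy
    exact ⟨hy.1, hy.2⟩
  have hγU : γ ⊆ U := by
    intro x hx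
    refine ⟨?_, ?_⟩
    · exact norm_ne_zero_iff.1 (by rw [hFγ1 x hx]; norm_num)
    · rw [hψid x hx]; simpa using hε
  obtain ⟨δ', hδ'pos, hδ'⟩ := hγcomp.exists_thickening_subset_open hUopen hγU
  refine ⟨δ' / 2, by positivity, ?_⟩
  intro η _ hη
  have hηU : η ⊆ U := by
    intro p hp
    obtain ⟨q, hq, hd⟩ := hη hp
    exact hδ' (Metric.mem_thickening_iff.2 ⟨q, hq, lt_of_le_of_lt hd (by linarith)⟩)
  refine ⟨ψ, hψcont.mono (fun p hp => (hηU hp).1), fun p hp => hψγ p, ?_⟩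
  intro p hp
  have := (hηU hp).2
  rwa [dist_eq_norm] at this

end
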